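/- arXiv:2307.04335 — 4 statements merged into one kernel-verified Lean document; each statement's English description precedes it below -/
import Mathlib

section
/- If T is a common supersequence of a set S of strings over alphabet X, and Y is a string over a disjoint alphabet, then T·Y·X is a common supersequence of the set {a·b·Y·X_{-ab} : ab ∈ S}, where X denotes the concatenation x_1...x_n of all letters of X and X_{-ab} denotes X with the letters a and b removed. -/
theorem stmt_0_general {α : Type*} [DecidableEq α]
    (X Y T : List α) (S : Set (List α))
    (hT : ∀ s ∈ S, s.Sublist T) :
    ∀ a b : α, [a, b] ∈ S →
      (([a, b] ++ Y) ++ X.filter (fun x => x ≠ a ∧ x ≠ b)).Sublist ((T ++ Y) ++ X) :=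
  fun _ _ hab => ((hT _ hab).append (.refl Y)).append List.filter_sublist

/-- If `T` is a common supersequence of a set `S` of two-letter strings
over alphabet `X`, and `Y` is a string over a disjoint alphabet, then `T ++ Y ++ X`
is a common supersequence of `{a·b·Y·X₋ₐᵦ : ab ∈ S}`. -/
theorem stmt_0 {α : Type*} [DecidableEq α]
    (X Y T : List α) (S : Set (List α))
    (hS : ∀ s ∈ S, ∃ a b : α, s = [a, b] ∧ a ≠ b ∧ a ∈ X ∧ b ∈ X)
    (hdisj : ∀ y ∈ Y, y ∉ X)
    (hT : ∀ s ∈ S, s.Sublist T) :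
    ∀ a b : α, [a, b] ∈ S →
      (([a, b] ++ Y) ++ X.filter (fun x => x ≠ a ∧ x ≠ b)).Sublist ((T ++ Y) ++ X) :=
  stmt_0_general X Y T S hT
end

section
/- Let S be a set of length-2 strings ab (a ≠ b) over alphabet X of size n, and let S_{ab} = a·b·Y·X_{-ab} with Y a string of N = n+k+1 new distinct separators. If T' is a common supersequence of all S_{ab} with |T'| ≤ k+N+n, and T' = P·R where R is the shortest suffix of T' containing Y as a subsequence, then |P| < N, and hence for every ab ∈ S, the string ab is a subsequence of P and X_{-ab} is a subsequence of R. -/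
/-!
Since `Y` is a subsequence of `R`, `|R| ≥ N`, so `|P| ≤ k + n < N`. An embedding of
`S_{ab} = a·b·Y·X₋ₐᵦ` into `P ++ R` cuts `S_{ab}` at some position `m ≤ |P| < N`. If `m ≤ 1`,
then `b·Y` embeds into `R`, so `Y` embeds into the strictly shorter suffix `R.tail`,
contradicting minimality. Hence `2 ≤ m ≤ N + 2`: `ab` lies in the part mapped into `P` and
`X₋ₐᵦ` in the part mapped into `R`.
-/

namespace List

variable {α : Type*}

theorem Sublist.exists_take_drop_of_append {l P R : List α} (h : l <+ P ++ R) :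
    ∃ m ≤ P.length, l.take m <+ P ∧ l.drop m <+ R := by
  obtain ⟨l₁, l₂, rfl, h₁, h₂⟩ := sublist_append_iff.mp h
  exact ⟨l₁.length, h₁.length_le, by simpa using h₁, by simpa using h₂⟩

theorem not_cons_sublist_of_shortest_suffix {c : α} {Y R T : List α} (hRT : R <:+ T)
    (hmin : ∀ R' : List α, R' <:+ T → Y <+ R' → R.length ≤ R'.length) :
    ¬ (c :: Y) <+ R := by
  intro hcY
  have := hmin R.tail (R.tail_suffix.trans hRT) hcY.tail
  have := hcY.length_le
  simp only [length_tail, length_cons] at *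
  omega

end List

theorem stmt_2_general {α : Type*} [DecidableEq α] (n k : ℕ)
    (X Y : List α)
    (hYlen : Y.length = n + k + 1)
    (S : Set (α × α))
    (T' P R : List α)
    (hT' : ∀ p ∈ S,
      (([p.1, p.2] ++ Y) ++ X.filter (fun x => x ≠ p.1 ∧ x ≠ p.2)).Sublist T')
    (hlen : T'.length ≤ k + (n + k + 1) + n)
    (hPR : T' = P ++ R)
    (hYR : Y.Sublist R)
    (hmin : ∀ R' : List α, R' <:+ T' → Y.Sublist R' → R.length ≤ R'.length) :
    P.length < n + k + 1 ∧
      ∀ p ∈ S, [p.1, p.2].Sublist P ∧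
        (X.filter (fun x => x ≠ p.1 ∧ x ≠ p.2)).Sublist R := by
  have hP : P.length < n + k + 1 := by
    have := hYR.length_le
    simp only [hPR, List.length_append] at hlen
    omega
  refine ⟨hP, fun p hp => ?_⟩
  set Z := X.filter (fun x => x ≠ p.1 ∧ x ≠ p.2)
  set l := p.1 :: p.2 :: (Y ++ Z)
  obtain ⟨m, hmP, htake, hdrop⟩ : ∃ m ≤ P.length, (l.take m).Sublist P ∧ (l.drop m).Sublist R :=
    (hPR ▸ hT' p hp : l.Sublist (P ++ R)).exists_take_drop_of_append
  have hm : 2 ≤ m := by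
    by_contra! hm
    have hbY : (p.2 :: Y).Sublist (l.drop m) :=
      ((Y.sublist_append_left Z).cons_cons p.2).trans
        (l.drop_sublist_drop_left (by omega : m ≤ 1))
    exact List.not_cons_sublist_of_shortest_suffix (hPR ▸ List.suffix_append P R) hmin
      (hbY.trans hdrop)
  refine ⟨(l.take_sublist_take_left hm).trans htake, ?_⟩
  have hZ : Z = l.drop (Y.length + 2) := by simp [l]
  exact hZ ▸ (l.drop_sublist_drop_left (by omega)).trans hdrop

/-- if `T'` is a common supersequence of all `S_{ab} = a·b·Y·X₋ₐᵦ` with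
`|T'| ≤ k + N + n` and `T' = P ++ R` where `R` is the shortest suffix of `T'` containing
`Y` as a subsequence, then `|P| < N`, and for every `ab ∈ S` the string `ab` is a
subsequence of `P` and `X₋ₐᵦ` is a subsequence of `R`. -/
theorem stmt_2 {α : Type*} [DecidableEq α] (n k : ℕ)
    (X Y : List α) (hXnd : X.Nodup) (hXlen : X.length = n)
    (hYnd : Y.Nodup) (hYlen : Y.length = n + k + 1)
    (hdisj : ∀ y ∈ Y, y ∉ X)
    (S : Set (α × α))
    (hS : ∀ p ∈ S, p.1 ∈ X ∧ p.2 ∈ X ∧ p.1 ≠ p.2)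
    (T' P R : List α)
    (hT' : ∀ p ∈ S,
      (([p.1, p.2] ++ Y) ++ X.filter (fun x => x ≠ p.1 ∧ x ≠ p.2)).Sublist T')
    (hlen : T'.length ≤ k + (n + k + 1) + n)
    (hPR : T' = P ++ R)
    (hYR : Y.Sublist R)
    (hmin : ∀ R' : List α, R' <:+ T' → Y.Sublist R' → R.length ≤ R'.length) :
    P.length < n + k + 1 ∧
      ∀ p ∈ S, [p.1, p.2].Sublist P ∧
        (X.filter (fun x => x ≠ p.1 ∧ x ≠ p.2)).Sublist R :=
  stmt_2_general n k X Y hYlen S T' P R hT' hlen hPR hYR hmin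
end

section
/- Under the lineage-taxon-string labeling of a line tree T(P) for permutation P = p_1...p_n, with an ordering π on Σ ∪ {ℓ} in which ℓ is the smallest element, the LTS of ℓ is exactly P and the LTS of every other taxon is empty. -/
/-! Since `ℓ` is the smallest taxon, the minimum below every node of the line is `ℓ`, so node `vᵢ`
is labelled `pᵢ` and the root `ℓ`: the labels read `P` along the line, which is the LTS of `ℓ`.
A taxon `pᵢ ≠ ℓ` labels `vᵢ`, which is the parent of its own leaf, so its LTS is empty. -/

/-- The label, under the ordering given by the linear order on `α`, of the internal
node `vᵢ` of the line tree `T(P)` (with extra bottom leaf `ℓ`): it is the larger of the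
minimum taxon below each of its two children, i.e. `max pᵢ (min{pᵢ₊₁, …, p_n, ℓ})`. -/
def lineLabel {α : Type} [LinearOrder α] (P : List α) (ℓ : α) (i : Fin P.length) : α :=
  max (P.get i) ((P.drop ((i : ℕ) + 1)).foldr min ℓ)

/-- The lineage taxon string (LTS) of the taxon `f` in the line tree `T(P)` under the
ordering given by the linear order on `α`: the string of labels of the internal nodes
on the path from the unique internal node labelled `f` down to the leaf `f`, excluding
the starting node's label.  The root is labelled with the overall smallest taxon
`min{p₁, …, p_n, ℓ}`, and `vᵢ` is labelled `lineLabel P ℓ i`. -/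
def lineLTS {α : Type} [LinearOrder α] (P : List α) (ℓ : α) (f : α) : List α :=
  let labels := List.ofFn (lineLabel P ℓ)
  let endIdx : ℕ := if f = ℓ then P.length else P.idxOf f + 1
  if f = P.foldr min ℓ then labels.take endIdx
  else
    match (List.finRange P.length).find? (fun i => decide (lineLabel P ℓ i = f)) with
    | some i => (labels.take endIdx).drop ((i : ℕ) + 1)
    | none => []

theorem List.foldr_min_eq_right {α : Type} [LinearOrder α] {b : α} {L : List α}
    (h : ∀ a ∈ L, b ≤ a) : L.foldr min b = b := by
  induction L with
  | nil => rfl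
  | cons a t ih =>
    rw [List.foldr_cons, ih fun c hc => h c (List.mem_cons_of_mem _ hc)]
    exact min_eq_right (h a List.mem_cons_self)

theorem List.idxOf_le_of_get_eq {α : Type} [BEq α] [LawfulBEq α] {L : List α} {i : Fin L.length}
    {a : α} (h : L.get i = a) : L.idxOf a ≤ i := by
  by_contra! hi
  have := List.not_of_lt_findIdx hi
  simp_all

section
variable {α : Type} [LinearOrder α] {P : List α} {ℓ : α}

theorem lineLabel_eq_get (hle : ∀ a ∈ P, ℓ ≤ a) (i : Fin P.length) :
    lineLabel P ℓ i = P.get i := by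
  rw [lineLabel, List.foldr_min_eq_right fun a ha => hle a (List.mem_of_mem_drop ha)]
  exact max_eq_left (hle _ (P.get_mem i))

theorem ofFn_lineLabel (hle : ∀ a ∈ P, ℓ ≤ a) : List.ofFn (lineLabel P ℓ) = P := by
  rw [funext (lineLabel_eq_get hle), List.ofFn_get]

theorem lineLTS_bottom_leaf (hle : ∀ a ∈ P, ℓ ≤ a) : lineLTS P ℓ ℓ = P := by
  simp [lineLTS, List.foldr_min_eq_right hle, ofFn_lineLabel hle]

theorem lineLTS_eq_nil_of_mem (hsmall : ∀ a ∈ P, ℓ < a) {f : α} (hf : f ∈ P) :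
    lineLTS P ℓ f = [] := by
  have hle : ∀ a ∈ P, ℓ ≤ a := fun a ha => (hsmall a ha).le
  have hne : f ≠ ℓ := (hsmall f hf).ne'
  simp only [lineLTS, List.foldr_min_eq_right hle, ofFn_lineLabel hle, if_neg hne]
  cases hfind : (List.finRange P.length).find? (fun i => decide (lineLabel P ℓ i = f)) with
  | none => rfl
  | some i =>
    have hi : P.get i = f := by simpa [lineLabel_eq_get hle] using List.find?_some hfind
    -- the first node labelled `f` is at or after position `idxOf f`, where the path is cut off
    refine List.drop_eq_nil_of_le ?_
    grw [List.length_take_le, List.idxOf_le_of_get_eq hi]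
end

theorem stmt_10_general {α : Type} [LinearOrder α] (P : List α) (ℓ : α)
    (hsmall : ∀ a ∈ P, ℓ < a) :
    lineLTS P ℓ ℓ = P ∧ ∀ f ∈ P, lineLTS P ℓ f = [] :=
  ⟨lineLTS_bottom_leaf fun a ha => (hsmall a ha).le, fun _ => lineLTS_eq_nil_of_mem hsmall⟩

/-- in the line tree `T(P)` for the permutation `P` of `Σ`, under an
ordering in which `ℓ` is the smallest element, the lineage taxon string of `ℓ` is
exactly `P`, and the LTS of every other taxon is empty. -/
theorem stmt_10 {α : Type} [LinearOrder α] (P : List α) (ℓ : α)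
    (hnd : P.Nodup) (hnotin : ℓ ∉ P) (hsmall : ∀ a ∈ P, ℓ < a) :
    lineLTS P ℓ ℓ = P ∧ ∀ f ∈ P, lineLTS P ℓ f = [] :=
  stmt_10_general P ℓ hsmall
end

section
/- Let P be a permutation of Σ, ℓ ∉ Σ, and π an ordering of Σ ∪ {ℓ} with ℓ not the smallest element. Define β_1 to be the π-smallest element, and recursively β_{j+1} = min_π{p_{x+1},...,p_n, ℓ} whenever β_j = p_x with β_j < min_π{p_n, ℓ}; let β_1,...,β_w be the resulting sequence ending at min_π{p_n, ℓ}. If S_j denotes the LTS of β_j in T(P) under π, then P equals the concatenation S_1[1..|S_1|−1]·β_1·S_2[1..|S_2|−1]·β_2·...·S_{w−1}[1..|S_{w−1}|−1]·β_{w−1}·S'_w, where S'_w = S_w if β_w = ℓ and S'_w = S_w[1..|S_w|−1]·β_w otherwise. -/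
/-- The chain `β₁, β₂, …, β_w`: starting from `β₁` (the overall smallest taxon),
while `β_j = p_x < min{p_n, ℓ}` set `β_{j+1} = min{p_{x+1}, …, p_n, ℓ}`;
the chain ends at `min{p_n, ℓ}`.  The first argument is a fuel parameter. -/
def betaChain {α : Type} [LinearOrder α] (P : List α) (ℓ : α) : ℕ → α → List α
  | 0, b => [b]
  | fuel + 1, b =>
      if b < min (P.getLastD ℓ) ℓ then
        b :: betaChain P ℓ fuel ((P.drop (P.idxOf b + 1)).foldr min ℓ)
      else [b]


/-!
Let `m` be the smallest taxon and write `P = A ++ m :: B`. Every internal node above `m` is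
labelled by its own taxon, the node of `m` by `m' = min (B ∪ {ℓ})`, and the nodes below it as in
`T(B)`; so the LTS of `m` is `A·m'`, and a taxon after `m` (or `ℓ`) has the same LTS in `T(P)` as
in `T(B)`. The chain of `P` is `m` followed by the chain of `B` started at `m'`, so the
decomposition of `P` is `A·m` followed by the decomposition of `B`, and induction on `|P|` ends
when `ℓ` is smallest: then every label is its own taxon and the LTS of `ℓ` is all of `P`.
-/

namespace LineTree

section Lists

variable {β : Type*}

theorem idxOf?_append_of_notMem [BEq β] [LawfulBEq β] {A L : List β} {b : β}
    (h : b ∉ A) : (A ++ L).idxOf? b = (L.idxOf? b).map (A.length + ·) := by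
  induction A with
  | nil => simp
  | cons a A ih =>
    rw [List.mem_cons, not_or] at h
    simp only [List.cons_append, List.idxOf?_cons, beq_false_of_ne (Ne.symm h.1),
      Bool.false_eq_true, ↓reduceIte, ih h.2, Option.map_map, List.length_cons]
    congr 1
    funext x
    simp only [Function.comp_apply]
    omega

theorem drop_take_append_cons (A L : List β) (c : β) (e k : ℕ) :
    ((A ++ c :: L).take (A.length + 1 + e)).drop (A.length + 1 + k) = (L.take e).drop k := by
  have hlen : A.length + 1 = (A ++ [c]).length := by simp
  rw [List.append_cons, hlen, List.take_length_add_append, List.drop_length_add_append]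

theorem getLastD_of_ne_nil {C : List β} (hC : C ≠ []) (d : β) :
    C.getLastD d = C.getLast hC := by
  rw [List.getLastD_eq_getLast?, List.getLast?_eq_some_getLast hC, Option.getD_some]

theorem getLastD_append_of_ne_nil (A : List β) {B : List β} (hB : B ≠ []) (d : β) :
    (A ++ B).getLastD d = B.getLastD d := by
  rw [getLastD_of_ne_nil hB, getLastD_of_ne_nil (List.append_ne_nil_of_right_ne_nil A hB),
    List.getLast_append_of_ne_nil _ hB]

theorem map_val_find?_finRange [DecidableEq β] {n : ℕ} (g : Fin n → β) (b : β) :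
    ((List.finRange n).find? fun i => decide (g i = b)).map Fin.val = (List.ofFn g).idxOf? b := by
  induction n with
  | zero => simp
  | succ n ih =>
    rw [List.finRange_succ, List.find?_cons, List.ofFn_succ, List.idxOf?_cons]
    by_cases h : g 0 = b
    · simp [h]
    · simp only [h, decide_false, List.find?_map, Function.comp_apply, Option.map_map,
        beq_iff_eq, ↓reduceIte, ← ih (fun i => g i.succ)]
      rfl

end Lists

variable {α : Type} [LinearOrder α]

theorem le_foldr_min_iff {L : List α} {ℓ c : α} :
    c ≤ L.foldr min ℓ ↔ (∀ a ∈ L, c ≤ a) ∧ c ≤ ℓ := by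
  induction L with
  | nil => simp
  | cons b L ih => simp [ih, and_assoc]

theorem foldr_min_le (L : List α) (ℓ : α) : L.foldr min ℓ ≤ ℓ :=
  (le_foldr_min_iff.1 le_rfl).2

theorem foldr_min_mem_or_eq (L : List α) (ℓ : α) :
    L.foldr min ℓ ∈ L ∨ L.foldr min ℓ = ℓ := by
  induction L with
  | nil => simp
  | cons b L ih =>
    rw [List.foldr_cons]
    rcases min_choice b (L.foldr min ℓ) with h | h <;> rw [h]
    · simp
    · rcases ih with ih | ih <;> simp [ih]

theorem foldr_min_eq_self_iff {L : List α} {ℓ : α} :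
    L.foldr min ℓ = ℓ ↔ ∀ a ∈ L, ℓ ≤ a :=
  ⟨fun h => (le_foldr_min_iff.1 h.ge).1,
    fun h => (foldr_min_le L ℓ).antisymm (le_foldr_min_iff.2 ⟨h, le_rfl⟩)⟩

theorem ofFn_lineLabel_cons (a : α) (Q : List α) (ℓ : α) :
    List.ofFn (lineLabel (a :: Q) ℓ) =
      max a (Q.foldr min ℓ) :: List.ofFn (lineLabel Q ℓ) := by
  simp only [List.ofFn_succ]
  rfl

theorem ofFn_lineLabel_append (A R : List α) (ℓ : α) (h : ∀ a ∈ A, R.foldr min ℓ ≤ a) :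
    List.ofFn (lineLabel (A ++ R) ℓ) = A ++ List.ofFn (lineLabel R ℓ) := by
  induction A with
  | nil => rfl
  | cons a A ih =>
    rw [List.cons_append, ofFn_lineLabel_cons, ih fun b hb => h b (by simp [hb]),
      List.foldr_append, max_eq_left ((foldr_min_le _ _).trans (h a (by simp)))]
    rfl

theorem ofFn_lineLabel_append_cons {A B : List α} {ℓ m : α}
    (hm : (A ++ m :: B).foldr min ℓ = m) :
    List.ofFn (lineLabel (A ++ m :: B) ℓ) =
      A ++ B.foldr min ℓ :: List.ofFn (lineLabel B ℓ) := by
  obtain ⟨hmP, hmℓ⟩ := le_foldr_min_iff.1 hm.ge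
  have hmB : m ≤ B.foldr min ℓ :=
    le_foldr_min_iff.2 ⟨fun a ha => hmP a (by simp [ha]), hmℓ⟩
  have hcons : (m :: B).foldr min ℓ = m := min_eq_left hmB
  rw [ofFn_lineLabel_append A (m :: B) ℓ fun a ha => by
      rw [hcons]; exact hmP a (by simp [ha]),
    ofFn_lineLabel_cons, max_eq_right hmB]

-- the cut-off `endIdx` of `lineLTS`
def leafEnd (P : List α) (ℓ f : α) : ℕ := if f = ℓ then P.length else P.idxOf f + 1

section LTS

variable {P : List α} {ℓ f : α}

theorem lineLTS_of_eq_foldr_min (hf : f = P.foldr min ℓ) :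
    lineLTS P ℓ f = (List.ofFn (lineLabel P ℓ)).take (leafEnd P ℓ f) := by
  unfold lineLTS
  rw [if_pos hf]
  rfl

theorem lineLTS_of_ne_foldr_min (hf : f ≠ P.foldr min ℓ) :
    lineLTS P ℓ f = (((List.ofFn (lineLabel P ℓ)).idxOf? f).map fun i =>
      ((List.ofFn (lineLabel P ℓ)).take (leafEnd P ℓ f)).drop (i + 1)).getD [] := by
  unfold lineLTS
  rw [if_neg hf, ← map_val_find?_finRange]
  cases (List.finRange P.length).find? fun i => decide (lineLabel P ℓ i = f) <;> rfl

end LTS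

theorem leafEnd_append_cons {A B : List α} {ℓ m f : α} (hfA : f ∉ A) (hfm : f ≠ m) :
    leafEnd (A ++ m :: B) ℓ f = A.length + 1 + leafEnd B ℓ f := by
  unfold leafEnd
  split_ifs
  · simp only [List.length_append, List.length_cons]
    omega
  · rw [List.idxOf_append_of_notMem hfA, List.idxOf_cons_ne _ hfm.symm]
    omega

theorem lineLTS_append_cons_self {A B : List α} {ℓ m : α}
    (hm : (A ++ m :: B).foldr min ℓ = m) (hmA : m ∉ A) (hmℓ : m ≠ ℓ) :
    lineLTS (A ++ m :: B) ℓ m = A ++ [B.foldr min ℓ] := by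
  rw [lineLTS_of_eq_foldr_min hm.symm, ofFn_lineLabel_append_cons hm, leafEnd, if_neg hmℓ,
    List.idxOf_append_of_notMem hmA, List.idxOf_cons_self, List.append_cons,
    List.take_append_of_le_length (by simp), List.take_of_length_le (by simp)]

theorem lineLTS_append_cons {A B : List α} {ℓ m f : α} (hm : (A ++ m :: B).foldr min ℓ = m)
    (hfA : f ∉ A) (hfm : f ≠ m) : lineLTS (A ++ m :: B) ℓ f = lineLTS B ℓ f := by
  rw [lineLTS_of_ne_foldr_min (by rwa [hm]), ofFn_lineLabel_append_cons hm,
    leafEnd_append_cons hfA hfm, idxOf?_append_of_notMem hfA, List.idxOf?_cons]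
  by_cases hf : f = B.foldr min ℓ
  · rw [lineLTS_of_eq_foldr_min hf, if_pos (beq_iff_eq.2 hf.symm)]
    simpa only [Option.map_some, Option.getD_some, Nat.add_zero, List.drop_zero] using
      drop_take_append_cons A (List.ofFn (lineLabel B ℓ)) (B.foldr min ℓ) (leafEnd B ℓ f) 0
  · rw [lineLTS_of_ne_foldr_min hf, if_neg (mt beq_iff_eq.1 (Ne.symm hf))]
    simp only [Option.map_map]
    congr 2
    funext i
    simpa [Nat.add_assoc, Nat.add_comm 1] using
      drop_take_append_cons A _ _ (leafEnd B ℓ f) (i + 1)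

theorem lineLTS_self_of_foldr_min_eq {P : List α} {ℓ : α} (h : P.foldr min ℓ = ℓ) :
    lineLTS P ℓ ℓ = P := by
  have hlabels := ofFn_lineLabel_append P [] ℓ (foldr_min_eq_self_iff.1 h)
  rw [List.append_nil, List.ofFn_zero, List.append_nil] at hlabels
  rw [lineLTS_of_eq_foldr_min h.symm, leafEnd, if_pos rfl, hlabels, List.take_length]

theorem betaChain_ne_nil (Q : List α) (ℓ : α) (f : ℕ) (b : α) :
    betaChain Q ℓ f b ≠ [] := by
  cases f with
  | zero => simp [betaChain]
  | succ f =>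
    simp only [betaChain]
    split_ifs <;> simp

theorem betaChain_self (Q : List α) (ℓ : α) (f : ℕ) : betaChain Q ℓ f ℓ = [ℓ] := by
  cases f with
  | zero => rfl
  | succ f => simp [betaChain]

section BetaChain

variable {ℓ b : α}

theorem mem_or_eq_of_mem_betaChain {Q : List α} {f : ℕ} {c : α} (hb : b ∈ Q ∨ b = ℓ)
    (hc : c ∈ betaChain Q ℓ f b) : c ∈ Q ∨ c = ℓ := by
  induction f generalizing b with
  | zero =>
    rw [betaChain, List.mem_singleton] at hc
    exact hc ▸ hb
  | succ f ih =>
    simp only [betaChain] at hc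
    split_ifs at hc
    · rcases List.mem_cons.1 hc with rfl | hc
      · exact hb
      · refine ih ?_ hc
        exact (foldr_min_mem_or_eq _ ℓ).imp_left List.mem_of_mem_drop
    · rwa [List.mem_singleton.1 hc]

theorem betaChain_append {A B : List α} (hAB : A.Disjoint B) (hB : B ≠ []) (f : ℕ)
    (hb : b ∈ B ∨ b = ℓ) : betaChain (A ++ B) ℓ f b = betaChain B ℓ f b := by
  induction f generalizing b with
  | zero => rfl
  | succ f ih =>
    simp only [betaChain, getLastD_append_of_ne_nil A hB ℓ]
    split_ifs with hlt
    · have hbB : b ∈ B := hb.resolve_right (lt_min_iff.1 hlt).2.ne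
      have hdrop : (A ++ B).drop ((A ++ B).idxOf b + 1) = B.drop (B.idxOf b + 1) := by
        rw [List.idxOf_append_of_notMem (fun h => hAB h hbB), Nat.add_assoc,
          List.drop_length_add_append]
      rw [hdrop, ih ((foldr_min_mem_or_eq _ ℓ).imp_left List.mem_of_mem_drop)]
    · rfl

end BetaChain

theorem betaChain_append_cons_foldr_min {A B : List α} {ℓ m : α}
    (hm : (A ++ m :: B).foldr min ℓ = m) (hnd : (A ++ m :: B).Nodup) (hmℓ : m ≠ ℓ)
    (f : ℕ) :
    betaChain (A ++ m :: B) ℓ (f + 1) m =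
      if B = [] then [m] else m :: betaChain B ℓ f (B.foldr min ℓ) := by
  have hmAB : m ∉ A ∧ m ∉ B := by simpa using (List.nodup_cons.1 (List.nodup_middle.1 hnd)).1
  rw [betaChain]
  split_ifs with hlt hB hB
  · subst hB
    simp at hlt
  · have hdrop : (A ++ m :: B).drop ((A ++ m :: B).idxOf m + 1) = B := by
      rw [List.idxOf_append_of_notMem hmAB.1, List.idxOf_cons_self, List.append_cons,
        Nat.add_zero]
      exact List.drop_left' (by simp)
    have hdisj : (A ++ [m]).Disjoint B := (List.nodup_append'.1 (by simpa using hnd)).2.2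
    rw [hdrop, List.append_cons, betaChain_append hdisj hB f (foldr_min_mem_or_eq B ℓ)]
  · rfl
  · obtain ⟨hmP, hmℓ'⟩ := le_foldr_min_iff.1 hm.ge
    have hlast : (A ++ m :: B).getLastD ℓ ∈ B := by
      rw [List.append_cons, getLastD_append_of_ne_nil _ hB, getLastD_of_ne_nil hB]
      exact List.getLast_mem hB
    refine absurd (lt_min ?_ (hmℓ'.lt_of_ne hmℓ)) hlt
    exact (hmP _ (List.mem_append_right A (List.mem_cons_of_mem m hlast))).lt_of_ne
      fun h => hmAB.2 (h ▸ hlast)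

section Concat

variable {β : Type*} [DecidableEq β]

def ltsConcat (S : β → List β) (ℓ : β) (C : List β) : List β :=
  (C.dropLast.map (fun b => (S b).dropLast ++ [b])).flatten ++
    (let bw := C.getLastD ℓ
     if bw = ℓ then S bw else (S bw).dropLast ++ [bw])

variable {S S' : β → List β} {ℓ b : β} {C : List β}

theorem ltsConcat_singleton :
    ltsConcat S ℓ [b] = if b = ℓ then S b else (S b).dropLast ++ [b] := rfl

theorem ltsConcat_cons (hC : C ≠ []) :
    ltsConcat S ℓ (b :: C) = (S b).dropLast ++ b :: ltsConcat S ℓ C := by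
  simp only [ltsConcat, List.dropLast_cons_of_ne_nil hC, List.map_cons, List.flatten_cons,
    List.getLastD_cons, getLastD_of_ne_nil hC, List.append_assoc, List.cons_append, List.nil_append]

theorem ltsConcat_congr (hC : C ≠ []) (h : ∀ c ∈ C, S c = S' c) :
    ltsConcat S ℓ C = ltsConcat S' ℓ C := by
  have hlast : C.getLastD ℓ ∈ C := getLastD_of_ne_nil hC ℓ ▸ List.getLast_mem hC
  simp only [ltsConcat, h _ hlast]
  congr 2
  exact List.map_congr_left fun c hc => by rw [h c (List.mem_of_mem_dropLast hc)]

end Concat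

theorem eq_ltsConcat_betaChain_of_foldr_min_eq {P : List α} {ℓ : α} (h : P.foldr min ℓ = ℓ)
    (f : ℕ) : P = ltsConcat (lineLTS P ℓ) ℓ (betaChain P ℓ f (P.foldr min ℓ)) := by
  rw [h, betaChain_self, ltsConcat_singleton, if_pos rfl, lineLTS_self_of_foldr_min_eq h]

theorem eq_ltsConcat_betaChain {ℓ : α} (f : ℕ) {P : List α} (hf : P.length ≤ f)
    (hnd : P.Nodup) (hℓ : ℓ ∉ P) :
    P = ltsConcat (lineLTS P ℓ) ℓ (betaChain P ℓ f (P.foldr min ℓ)) := by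
  induction f generalizing P with
  | zero =>
    obtain rfl := List.length_eq_zero_iff.1 (Nat.le_zero.1 hf)
    exact eq_ltsConcat_betaChain_of_foldr_min_eq rfl 0
  | succ f ih =>
    by_cases hmin : P.foldr min ℓ = ℓ
    · exact eq_ltsConcat_betaChain_of_foldr_min_eq hmin _
    obtain ⟨m, hm⟩ : ∃ m, P.foldr min ℓ = m := ⟨_, rfl⟩
    obtain ⟨A, B, rfl⟩ :=
      List.append_of_mem (hm ▸ (foldr_min_mem_or_eq P ℓ).resolve_right hmin)
    have hmℓ : m ≠ ℓ := hm ▸ hmin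
    have hmAB : m ∉ A ∧ m ∉ B := by
      simpa using (List.nodup_cons.1 (List.nodup_middle.1 hnd)).1
    have hfirst : lineLTS (A ++ m :: B) ℓ m = A ++ [B.foldr min ℓ] :=
      lineLTS_append_cons_self hm hmAB.1 hmℓ
    rw [hm, betaChain_append_cons_foldr_min hm hnd hmℓ f]
    split_ifs with hB
    · subst hB
      rw [ltsConcat_singleton, if_neg hmℓ, hfirst, List.dropLast_concat]
    · obtain ⟨-, hBnd, hAB⟩ := List.nodup_append.1 hnd
      have htransfer : ∀ c ∈ betaChain B ℓ f (B.foldr min ℓ),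
          lineLTS (A ++ m :: B) ℓ c = lineLTS B ℓ c := by
        intro c hc
        rcases mem_or_eq_of_mem_betaChain (foldr_min_mem_or_eq B ℓ) hc with hcB | rfl
        · exact lineLTS_append_cons hm (fun hcA => hAB c hcA c (List.mem_cons_of_mem m hcB) rfl)
            (fun h => hmAB.2 (h ▸ hcB))
        · exact lineLTS_append_cons hm (fun hcA => hℓ (List.mem_append_left _ hcA)) hmℓ.symm
      have hC := betaChain_ne_nil B ℓ f (B.foldr min ℓ)
      have hlen : B.length ≤ f := by
        simp only [List.length_append, List.length_cons] at hf
        omega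
      rw [ltsConcat_cons hC, hfirst, List.dropLast_concat, ltsConcat_congr hC htransfer,
        ← ih hlen hBnd.of_cons (fun h => hℓ (by simp [h]))]

end LineTree

theorem stmt_11_general {α : Type} [LinearOrder α] (P : List α) (ℓ : α)
    (hnd : P.Nodup) (hnotin : ℓ ∉ P) :
    P =
      ((betaChain P ℓ P.length (P.foldr min ℓ)).dropLast.map
          (fun b => (lineLTS P ℓ b).dropLast ++ [b])).flatten ++
        (let bw := (betaChain P ℓ P.length (P.foldr min ℓ)).getLastD ℓ
         if bw = ℓ then lineLTS P ℓ bw else (lineLTS P ℓ bw).dropLast ++ [bw]) :=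
  LineTree.eq_ltsConcat_betaChain P.length le_rfl hnd hnotin

/-- for a permutation `P` of `Σ`, `ℓ ∉ Σ`, and an ordering of `Σ ∪ {ℓ}`
in which `ℓ` is not the smallest element, with `β₁, …, β_w` the chain defined above and
`S_j` the LTS of `β_j` in `T(P)`, the permutation `P` equals the concatenation
`S₁[1..|S₁|−1]·β₁ ⋯ S_{w−1}[1..|S_{w−1}|−1]·β_{w−1}·S'_w`, where `S'_w = S_w` if
`β_w = ℓ` and `S'_w = S_w[1..|S_w|−1]·β_w` otherwise. -/
theorem stmt_11 {α : Type} [LinearOrder α] (P : List α) (ℓ : α)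
    (hnd : P.Nodup) (hnotin : ℓ ∉ P) (hne : P ≠ [])
    (hℓ : P.foldr min ℓ ≠ ℓ) :
    P =
      ((betaChain P ℓ P.length (P.foldr min ℓ)).dropLast.map
          (fun b => (lineLTS P ℓ b).dropLast ++ [b])).flatten ++
        (let bw := (betaChain P ℓ P.length (P.foldr min ℓ)).getLastD ℓ
         if bw = ℓ then lineLTS P ℓ bw else (lineLTS P ℓ bw).dropLast ++ [bw]) :=
  stmt_11_general P ℓ hnd hnotin
end
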